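/- arXiv:1111.4316 — 3 statements merged into one kernel-verified Lean document; each statement's English description precedes it below -/
import Mathlib

section
/- Reduction from directed graph reachability (the hardness direction of the theorem that the action-and-test-free fragment of NautiLOD is NL-complete): let E : U → U → Prop be an arbitrary directed-edge relation on the URIs, fix a predicate p₀ : U, and encode the graph as the description function D with D x = {(x, p₀, y) | E x y}. Then for all URIs u, v: v ∈ Sel_D(wild*, u) if and only if v is reachable from u in the graph, i.e., Relation.ReflTransGen E u v. -/
/-- Test-free NautiLOD expressions. -/
inductive Expr (U : Type*) : Type _ where
  | pred : U → Expr U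
  | inv  : U → Expr U
  | wild : Expr U
  | seq  : Expr U → Expr U → Expr U
  | opt  : Expr U → Expr U
  | star : Expr U → Expr U
  | alt  : Expr U → Expr U → Expr U

/-- `iter f n u` is the set of URIs reachable from `u` by `n` successive steps of `f`;
for `n ≥ 1` it coincides with the semantics of the `n`-fold concatenation `e/⋯/e`. -/
def iter {U : Type*} (f : U → Set U) : ℕ → U → Set U
  | 0, u => {u}
  | n + 1, u => ⋃ v ∈ iter f n u, f v

/-- Selection function `Sel_D(e, u)`. -/
def Sel {U : Type*} (D : U → Set (U × U × U)) : Expr U → U → Set U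
  | .pred p, u => {v | (u, p, v) ∈ D u}
  | .inv p,  u => {v | (v, p, u) ∈ D u}
  | .wild,   u => {v | ∃ p, (u, p, v) ∈ D u}
  | .seq e₁ e₂, u => ⋃ v ∈ Sel D e₁ u, Sel D e₂ v
  | .opt e, u => {u} ∪ Sel D e u
  | .star e, u => {u} ∪ ⋃ n : ℕ, iter (Sel D e) (n + 1) u
  | .alt e₁ e₂, u => Sel D e₁ u ∪ Sel D e₂ u

lemma wild_eq {U : Type*} (E : U → U → Prop) (p₀ : U) (x y : U) :
    y ∈ Sel (fun x => {t : U × U × U | ∃ y, E x y ∧ t = (x, p₀, y)}) .wild x ↔ E x y := by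
  simp only [Sel, Set.mem_setOf_eq]
  constructor
  · rintro ⟨p, z, hz, h⟩
    cases h; exact hz
  · intro h; exact ⟨p₀, y, h, rfl⟩

lemma iter_imp {U : Type*} (E : U → U → Prop) (p₀ : U) :
    ∀ n (u v : U),
      v ∈ iter (Sel (fun x => {t : U × U × U | ∃ y, E x y ∧ t = (x, p₀, y)}) .wild) n u →
      Relation.ReflTransGen E u v := by
  intro n
  induction n with
  | zero => intro u v h; cases h; exact .refl
  | succ n ih =>
      intro u v h
      simp only [iter, Set.mem_iUnion] at h
      obtain ⟨w, hw, hv⟩ := h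
      exact (ih u w hw).tail ((wild_eq E p₀ w v).1 hv)

theorem wild_star_reachability {U : Type*} (E : U → U → Prop) (p₀ : U) (u v : U) :
    v ∈ Sel (fun x => {t : U × U × U | ∃ y, E x y ∧ t = (x, p₀, y)}) (.star .wild) u ↔
      Relation.ReflTransGen E u v := by
  constructor
  · intro h
    rcases h with h | h
    · cases h; exact .refl
    · simp only [Set.mem_iUnion] at h
      obtain ⟨n, hn⟩ := h
      exact iter_imp E p₀ (n + 1) u v hn
  · intro h
    induction h with
    | refl => exact Or.inl rfl
    | tail hwb hbc ih =>
        rename_i b c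
        right
        have step : ∀ n, b ∈ iter (Sel (fun x => {t : U × U × U | ∃ y, E x y ∧ t = (x, p₀, y)}) .wild) n u →
            c ∈ iter (Sel (fun x => {t : U × U × U | ∃ y, E x y ∧ t = (x, p₀, y)}) .wild) (n + 1) u := by
          intro n hn
          rw [show iter (Sel (fun x => {t : U × U × U | ∃ y, E x y ∧ t = (x, p₀, y)}) .wild) (n+1) u
              = ⋃ w ∈ iter (Sel (fun x => {t : U × U × U | ∃ y, E x y ∧ t = (x, p₀, y)}) .wild) n u,
                Sel (fun x => {t : U × U × U | ∃ y, E x y ∧ t = (x, p₀, y)}) .wild w from rfl]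
          exact Set.mem_biUnion hn ((wild_eq E p₀ b c).2 hbc)
        simp only [Set.mem_iUnion]
        rcases ih with h0 | h1
        · cases h0
          exact ⟨0, step 0 rfl⟩
        · simp only [Set.mem_iUnion] at h1
          obtain ⟨n, hn⟩ := h1
          exact ⟨n + 1, step (n + 1) hn⟩
end

section
/- Every URI selected by a test-free NautiLOD expression lies in the dereferencing-reachable part of the Web (the paper's claim that 'what really matters is not the whole Web, but only the set of nodes reachable by the expression'): define the one-step dereferencing relation R_D by R_D x y ↔ ∃ p, (x, p, y) ∈ D x ∨ (y, p, x) ∈ D x. Then for every test-free NautiLOD expression e, every description function D, and every URI u, Sel_D(e, u) ⊆ {v | Relation.ReflTransGen R_D u v}. -/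
theorem sel_subset_reachable {U : Type*} (D : U → Set (U × U × U))
    (e : Expr U) (u : U) :
    Sel D e u ⊆ {v | Relation.ReflTransGen
      (fun x y => ∃ p, (x, p, y) ∈ D x ∨ (y, p, x) ∈ D x) u v} := by
  set R := fun x y : U => ∃ p, (x, p, y) ∈ D x ∨ (y, p, x) ∈ D x with hR
  induction e generalizing u with
  | pred p =>
    intro v hv
    exact Relation.ReflTransGen.single ⟨p, Or.inl hv⟩
  | inv p =>
    intro v hv
    exact Relation.ReflTransGen.single ⟨p, Or.inr hv⟩
  | wild =>
    rintro v ⟨p, hp⟩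
    exact Relation.ReflTransGen.single ⟨p, Or.inl hp⟩
  | seq e₁ e₂ ih₁ ih₂ =>
    intro v hv
    simp only [Sel, Set.mem_iUnion] at hv
    obtain ⟨w, hw, hv⟩ := hv
    exact (ih₁ u hw).trans (ih₂ w hv)
  | opt e ih =>
    rintro v (rfl | hv)
    · exact Relation.ReflTransGen.refl
    · exact ih u hv
  | star e ih =>
    have key : ∀ n u, iter (Sel D e) n u ⊆ {v | Relation.ReflTransGen R u v} := by
      intro n
      induction n with
      | zero => rintro u v rfl; exact Relation.ReflTransGen.refl
      | succ n ihn =>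
        intro u v hv
        simp only [iter, Set.mem_iUnion] at hv
        obtain ⟨w, hw, hv⟩ := hv
        exact (ihn u hw).trans (ih w hv)
    rintro v (rfl | hv)
    · exact Relation.ReflTransGen.refl
    · simp only [Set.mem_iUnion] at hv
      obtain ⟨n, hn⟩ := hv
      exact key (n + 1) u hn
  | alt e₁ e₂ ih₁ ih₂ =>
    rintro v (hv | hv)
    · exact ih₁ u hv
    · exact ih₂ u hv
end

section
/- Locality of evaluation: define the one-step dereferencing relation R_D by R_D x y ↔ ∃ p, (x, p, y) ∈ D x ∨ (y, p, x) ∈ D x. Let D and D' be two description functions and u a URI such that D v = D' v for every v with Relation.ReflTransGen R_D u v. Then for every test-free NautiLOD expression e, Sel_D(e, u) = Sel_{D'}(e, u); that is, the evaluation of an expression depends only on the descriptions of the nodes reachable from the seed URI, not on the whole Web. -/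
section
variable {U : Type*}

private def R (D : U → Set (U × U × U)) (x y : U) : Prop :=
  ∃ p, (x, p, y) ∈ D x ∨ (y, p, x) ∈ D x

private lemma iter_reach (D : U → Set (U × U × U)) (f : U → Set U)
    (hf : ∀ v w, w ∈ f v → Relation.ReflTransGen (R D) v w) :
    ∀ n v x, x ∈ iter f n v → Relation.ReflTransGen (R D) v x := by
  intro n
  induction n with
  | zero => intro v x hx; cases hx; exact .refl
  | succ m ihm =>
    intro v x hx
    simp only [iter, Set.mem_iUnion] at hx
    obtain ⟨y, hy, hx⟩ := hx
    exact (ihm v y hy).trans (hf y x hx)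

private lemma sel_step (D : U → Set (U × U × U)) :
    ∀ e : Expr U, ∀ v w, w ∈ Sel D e v → Relation.ReflTransGen (R D) v w := by
  intro e
  induction e with
  | pred p => intro v w h; exact .single ⟨p, Or.inl h⟩
  | inv p => intro v w h; exact .single ⟨p, Or.inr h⟩
  | wild => intro v w h; obtain ⟨p, hp⟩ := h; exact .single ⟨p, Or.inl hp⟩
  | seq e₁ e₂ ih₁ ih₂ =>
    intro v w h
    simp only [Sel, Set.mem_iUnion] at h
    obtain ⟨x, hx, hw⟩ := h
    exact (ih₁ v x hx).trans (ih₂ x w hw)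
  | opt e ih =>
    intro v w h
    rcases h with h | h
    · cases h; exact .refl
    · exact ih v w h
  | star e ih =>
    intro v w h
    rcases h with h | h
    · cases h; exact .refl
    · simp only [Set.mem_iUnion] at h
      obtain ⟨n, hn⟩ := h
      exact iter_reach D (Sel D e) ih (n + 1) v w hn
  | alt e₁ e₂ ih₁ ih₂ =>
    intro v w h
    rcases h with h | h
    · exact ih₁ v w h
    · exact ih₂ v w h

end

theorem sel_locality {U : Type*} (D D' : U → Set (U × U × U)) (u : U)
    (hloc : ∀ v, Relation.ReflTransGen
      (fun x y => ∃ p, (x, p, y) ∈ D x ∨ (y, p, x) ∈ D x) u v → D v = D' v)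
    (e : Expr U) :
    Sel D e u = Sel D' e u := by
  have key : ∀ e : Expr U, ∀ v, Relation.ReflTransGen (R D) u v →
      Sel D e v = Sel D' e v := by
    intro e
    induction e with
    | pred p => intro v hv; simp only [Sel, hloc v hv]
    | inv p => intro v hv; simp only [Sel, hloc v hv]
    | wild => intro v hv; simp only [Sel, hloc v hv]
    | seq e₁ e₂ ih₁ ih₂ =>
      intro v hv
      simp only [Sel, ih₁ v hv]
      apply Set.iUnion_congr; intro x
      apply Set.iUnion_congr; intro hx
      rw [← ih₁ v hv] at hx
      exact ih₂ x (hv.trans (sel_step D e₁ v x hx))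
    | opt e ih => intro v hv; simp only [Sel, ih v hv]
    | star e ih =>
      intro v hv
      simp only [Sel]
      congr 1
      apply Set.iUnion_congr; intro n
      induction n with
      | zero =>
        show iter (Sel D e) 1 v = iter (Sel D' e) 1 v
        simp [iter, ih v hv]
      | succ m ihm =>
        show iter (Sel D e) (m + 2) v = iter (Sel D' e) (m + 2) v
        have hreach : ∀ x, x ∈ iter (Sel D e) (m + 1) v → Relation.ReflTransGen (R D) v x :=
          fun x hx => iter_reach D (Sel D e) (sel_step D e) (m + 1) v x hx

        ext w
        show w ∈ ⋃ x ∈ iter (Sel D e) (m+1) v, Sel D e x ↔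
          w ∈ ⋃ x ∈ iter (Sel D' e) (m+1) v, Sel D' e x
        simp only [Set.mem_iUnion]
        constructor
        · rintro ⟨x, hx, hw⟩
          refine ⟨x, ihm ▸ hx, ?_⟩
          rw [← ih x (hv.trans (hreach x hx))]; exact hw
        · rintro ⟨x, hx, hw⟩
          have hx' : x ∈ iter (Sel D e) (m+1) v := ihm ▸ hx
          refine ⟨x, hx', ?_⟩
          rw [ih x (hv.trans (hreach x hx'))]; exact hw
    | alt e₁ e₂ ih₁ ih₂ => intro v hv; simp only [Sel, ih₁ v hv, ih₂ v hv]
  exact key e u .refl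
end
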